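/- arXiv:1001.4462 — 6 statements merged into one kernel-verified Lean document; each statement's English description precedes it below -/
import Mathlib

section
/- For every computably decidable set A of binary strings such that for every n the number of strings of length n in A is at least 2^n/3 (i.e., 3·|A ∩ {0,1}^n| ≥ 2^n), there exists an optimal plain decompressor whose domain is a subset of A. -/
open scoped Classical

/-- Complexity of `x` with respect to decompressor `D`: length of a shortest
`D`-description of `x`, or `⊤` if none exists. -/
noncomputable def Cpx (D : List Bool →. List Bool) (x : List Bool) : ℕ∞ :=
  sInf {n : ℕ∞ | ∃ y : List Bool, x ∈ D y ∧ (y.length : ℕ∞) = n}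

/-- A set of strings is prefix-free: no element is a proper prefix of another. -/
def PrefixFreeSet (S : Set (List Bool)) : Prop :=
  ∀ p ∈ S, ∀ q ∈ S, p <+: q → p = q

/-- `U` is an optimal plain decompressor. -/
def OptimalPlain (U : List Bool →. List Bool) : Prop :=
  Partrec U ∧ ∀ D : List Bool →. List Bool, Partrec D →
    ∃ c : ℕ, ∀ x : List Bool, Cpx U x ≤ Cpx D x + (c : ℕ∞)

/-- `V` is an optimal prefix-free decompressor. -/
def OptimalPrefix (V : List Bool →. List Bool) : Prop :=
  Partrec V ∧ PrefixFreeSet V.Dom ∧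
    ∀ D : List Bool →. List Bool, Partrec D → PrefixFreeSet D.Dom →
      ∃ c : ℕ, ∀ x : List Bool, Cpx V x ≤ Cpx D x + (c : ℕ∞)

/-!
Among the strings of length `n + 2` at least `2 ^ n` lie in `A`, so a string `y` of length `n`
can be encoded as the member of `A` of length `n + 2` whose rank among those members is the
binary value of `y`. Decoding such a rank computably and then running a universal
decompressor costs two extra bits, and the result is defined only on `A`.
-/

def bitsToNat : List Bool → ℕ := List.foldr Nat.bit 0

def natToBits : ℕ → ℕ → List Bool
  | 0, _ => []
  | m + 1, j => j.bodd :: natToBits m j.div2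

@[simp] lemma bitsToNat_cons (b : Bool) (l : List Bool) :
    bitsToNat (b :: l) = Nat.bit b (bitsToNat l) := rfl

@[simp] lemma length_natToBits (m j : ℕ) : (natToBits m j).length = m := by
  induction m generalizing j <;> simp [natToBits, *]

lemma bitsToNat_lt (l : List Bool) : bitsToNat l < 2 ^ l.length := by
  induction l with
  | nil => simp [bitsToNat]
  | cons b l ih => simpa using ih

lemma natToBits_bitsToNat (l : List Bool) : natToBits l.length (bitsToNat l) = l := by
  induction l with
  | nil => rfl
  | cons b l ih => simp [natToBits, Nat.bodd_bit, Nat.div2_bit, ih]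

lemma bitsToNat_natToBits {m j : ℕ} (hj : j < 2 ^ m) : bitsToNat (natToBits m j) = j := by
  induction m generalizing j with
  | zero => simp_all [natToBits, bitsToNat]
  | succ m ih =>
    have : j.div2 < 2 ^ m := by rw [Nat.div2_val, pow_succ] at *; omega
    simp [natToBits, ih this]

lemma natToBits_eq_map_range (m j : ℕ) :
    natToBits m j = (List.range m).map fun i => (j / 2 ^ i).bodd := by
  induction m generalizing j with
  | zero => rfl
  | succ m ih =>
    simp [natToBits, ih, List.range_succ_eq_map, Nat.div2_val, Nat.div_div_eq_div_mul, pow_succ']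

lemma primrec_bitsToNat : Primrec bitsToNat :=
  (Primrec.list_foldr Primrec.id (Primrec.const 0) <|
    (Primrec.nat_add.comp (Primrec.nat_mul.comp (Primrec.const 2) (Primrec.snd.comp Primrec.snd))
      (Primrec.cond (Primrec.fst.comp Primrec.snd) (Primrec.const 1) (Primrec.const 0))).to₂).of_eq
    fun l => by induction l with
      | nil => rfl
      | cons b l ih => cases b <;> simp_all [bitsToNat, Nat.bit_val]

lemma primrec₂_natToBits : Primrec₂ natToBits := by
  have hpow : Primrec₂ ((· ^ ·) : ℕ → ℕ → ℕ) := Primrec₂.unpaired'.1 Nat.Primrec.pow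
  refine (Primrec.list_map (Primrec.list_range.comp Primrec.fst)
    (Primrec.nat_bodd.comp (Primrec.nat_div.comp (Primrec.snd.comp Primrec.fst)
      (hpow.comp (Primrec.const 2) Primrec.snd))).to₂).of_eq fun p => ?_
  rw [natToBits_eq_map_range]

lemma Nat.exists_lt_count_eq {p : ℕ → Prop} [DecidablePred p] {r K : ℕ}
    (h : r < Nat.count p K) : ∃ j < K, p j ∧ Nat.count p j = r := by
  have hcard : ∀ hf : (Set.ofPred p).Finite, r < hf.toFinset.card :=
    fun hf => h.trans_le (Nat.count_le_card hf K)
  exact ⟨Nat.nth p r, Nat.nth_lt_of_lt_count h, Nat.nth_mem r hcard, Nat.count_nth hcard⟩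

lemma Computable.nat_count {α : Type*} [Primcodable α] {p : α → ℕ → Bool}
    (hp : Computable₂ p) : Computable₂ fun a n => Nat.count (fun j => p a j) n := by
  suffices Computable fun q : α × ℕ => Nat.count (fun j => p q.1 j) q.2 from this
  refine (Computable.nat_rec Computable.snd (Computable.const 0)
    (Primrec.nat_add.to_comp.comp (Computable.snd.comp Computable.snd)
      (Computable.cond (hp.comp (Computable.fst.comp Computable.fst)
        (Computable.fst.comp Computable.snd)) (Computable.const 1)
        (Computable.const 0))).to₂).of_eq fun q => ?_
  induction q.2 with
  | zero => simp
  | succ n ih => simp [Nat.count_succ, ih]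

lemma ncard_setOf_length_eq (p : List Bool → Prop) [DecidablePred p] (m : ℕ) :
    {x | p x ∧ x.length = m}.ncard = Nat.count (fun j => p (natToBits m j)) (2 ^ m) := by
  have himage : {x | p x ∧ x.length = m} =
      natToBits m '' {j | j < 2 ^ m ∧ p (natToBits m j)} := by
    ext x
    constructor
    · rintro ⟨hp, rfl⟩
      exact ⟨bitsToNat x, ⟨bitsToNat_lt x, by rwa [natToBits_bitsToNat]⟩, natToBits_bitsToNat x⟩
    · rintro ⟨j, ⟨-, hp⟩, rfl⟩
      exact ⟨hp, length_natToBits m j⟩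
  have hinj : Set.InjOn (natToBits m) {j | j < 2 ^ m ∧ p (natToBits m j)} :=
    fun i hi j hj hij => by
      rw [← bitsToNat_natToBits hi.1, ← bitsToNat_natToBits hj.1, hij]
  rw [himage, hinj.ncard_image, Nat.count_eq_card_filter_range,
    ← Set.ncard_coe_finset]
  congr 1
  ext j
  simp

def Simulates (U D : List Bool →. List Bool) (c : ℕ) : Prop :=
  ∀ y x, x ∈ D y → ∃ y', x ∈ U y' ∧ y'.length ≤ y.length + c

lemma cpx_le_length {D : List Bool →. List Bool} {x y : List Bool} (h : x ∈ D y) :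
    Cpx D x ≤ y.length :=
  sInf_le ⟨y, h, rfl⟩

lemma exists_length_eq_cpx {D : List Bool →. List Bool} {x : List Bool} (h : Cpx D x ≠ ⊤) :
    ∃ y, x ∈ D y ∧ (y.length : ℕ∞) = Cpx D x := by
  have hne : {n : ℕ∞ | ∃ y : List Bool, x ∈ D y ∧ (y.length : ℕ∞) = n}.Nonempty :=
    Set.nonempty_iff_ne_empty.2 fun he => h (by rw [Cpx, he, sInf_empty])
  exact csInf_mem hne

lemma Simulates.cpx_le {U D : List Bool →. List Bool} {c : ℕ} (h : Simulates U D c)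
    (x : List Bool) : Cpx U x ≤ Cpx D x + c := by
  rcases eq_or_ne (Cpx D x) ⊤ with htop | htop
  · simp [htop]
  obtain ⟨y, hy, hlen⟩ := exists_length_eq_cpx htop
  obtain ⟨y', hy', hle⟩ := h y x hy
  calc Cpx U x ≤ y'.length := cpx_le_length hy'
    _ ≤ y.length + c := by exact_mod_cast hle
    _ = Cpx D x + c := by rw [hlen]

lemma Simulates.trans {U V W : List Bool →. List Bool} {c c' : ℕ}
    (hUV : Simulates U V c) (hVW : Simulates V W c') : Simulates U W (c' + c) := by
  intro y x hx
  obtain ⟨y₁, hy₁, hle₁⟩ := hVW y x hx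
  obtain ⟨y₂, hy₂, hle₂⟩ := hUV y₁ x hy₁
  exact ⟨y₂, hy₂, by omega⟩

lemma optimalPlain_of_simulates {U : List Bool →. List Bool} (hU : Partrec U)
    (h : ∀ D : List Bool →. List Bool, Partrec D → ∃ c, Simulates U D c) : OptimalPlain U :=
  ⟨hU, fun D hD => (h D hD).imp fun _ hc => hc.cpx_le⟩

/-- Reads `1^e 0 z` as program number `e` applied to the input `z`. -/
def univDecomp : List Bool →. List Bool := fun y =>
  let e := y.idxOf false
  ((Denumerable.ofNat Nat.Partrec.Code e).eval (Encodable.encode (y.drop (e + 1)))).bind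
    fun n => (Encodable.decode n : Option (List Bool))

lemma partrec_univDecomp : Partrec univDecomp := by
  have he : Computable fun y : List Bool => y.idxOf false :=
    (Primrec.list_idxOf.comp (Primrec.const false) Primrec.id).to_comp
  exact Partrec.bind
    (Nat.Partrec.Code.eval_part.comp ((Computable.ofNat _).comp he)
      (Computable.encode.comp (Primrec.list_drop.to_comp.comp
        (Primrec.succ.to_comp.comp he) Computable.id)))
    (Computable.ofOption (Computable.decode.comp Computable.snd)).to₂

lemma univDecomp_replicate_append (e : ℕ) (z : List Bool) :
    univDecomp (List.replicate e true ++ false :: z) =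
      ((Denumerable.ofNat Nat.Partrec.Code e).eval (Encodable.encode z)).bind
        fun n => (Encodable.decode n : Option (List Bool)) := by
  have : (List.replicate e true ++ false :: z).idxOf false = e := by
    induction e with
    | zero => simp
    | succ e ih => simpa [List.replicate_succ] using ih
  simp [univDecomp, this, List.drop_append]

lemma exists_simulates_univDecomp {D : List Bool →. List Bool} (hD : Partrec D) :
    ∃ c, Simulates univDecomp D c := by
  obtain ⟨code, hcode⟩ := Nat.Partrec.Code.exists_code.1 hD
  refine ⟨Encodable.encode code + 1, fun y x hx =>
    ⟨List.replicate (Encodable.encode code) true ++ false :: y, ?_, by simp; omega⟩⟩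
  simpa [univDecomp_replicate_append, hcode, Encodable.encodek] using hx

lemma simulates_bind_of_surjective {R : List Bool → Option (List Bool)}
    {U : List Bool →. List Bool} {c : ℕ}
    (hR : ∀ y, ∃ d, R d = some y ∧ d.length ≤ y.length + c) :
    Simulates (fun d => (R d : Part (List Bool)).bind U) U c := by
  intro y x hx
  obtain ⟨d, hd, hle⟩ := hR y
  exact ⟨d, Part.mem_bind (by simp [hd]) hx, hle⟩

section RankDecode

def rankDecode (χ : List Bool → Bool) (k : ℕ) (d : List Bool) : Option (List Bool) :=
  bif χ d then
    some (natToBits (d.length - k) (Nat.count (fun j => χ (natToBits d.length j)) (bitsToNat d)))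
  else none

variable {χ : List Bool → Bool}

lemma computable_rankDecode (hχ : Computable χ) (k : ℕ) : Computable (rankDecode χ k) := by
  have hlen : Computable fun d : List Bool => d.length := Primrec.list_length.to_comp
  have hcount : Computable₂ fun m n => Nat.count (fun j => χ (natToBits m j)) n :=
    Computable.nat_count (hχ.comp primrec₂_natToBits.to_comp)
  exact Computable.cond hχ
    (Computable.option_some.comp (primrec₂_natToBits.to_comp.comp
      (Primrec.nat_sub.to_comp.comp hlen (Computable.const k))
      (hcount.comp hlen primrec_bitsToNat.to_comp)))
    (Computable.const none)

lemma rankDecode_eq_none {d : List Bool} (hd : χ d = false) (k : ℕ) :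
    rankDecode χ k d = none := by
  simp [rankDecode, hd]

lemma exists_rankDecode_eq {k : ℕ}
    (hχ : ∀ n, 2 ^ n ≤ Nat.count (fun j => χ (natToBits (n + k) j)) (2 ^ (n + k)))
    (y : List Bool) : ∃ d, rankDecode χ k d = some y ∧ d.length = y.length + k := by
  obtain ⟨j, hj, hχj, hcount⟩ :=
    Nat.exists_lt_count_eq ((bitsToNat_lt y).trans_le (hχ y.length))
  refine ⟨natToBits (y.length + k) j, ?_, length_natToBits _ _⟩
  simp [rankDecode, hχj, bitsToNat_natToBits hj, hcount, natToBits_bitsToNat]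

end RankDecode

theorem stmt2 (A : Set (List Bool)) (hA : ComputablePred (· ∈ A))
    (hdense : ∀ n : ℕ, 2 ^ n ≤ 3 * ({x | x ∈ A ∧ x.length = n} : Set (List Bool)).ncard) :
    ∃ U : List Bool →. List Bool, OptimalPlain U ∧ U.Dom ⊆ A := by
  obtain ⟨χ, hχ, hAχ⟩ := ComputablePred.computable_iff.1 hA
  obtain rfl : A = {x | χ x = true} := Set.ext fun x => (congrFun hAχ x).to_iff
  have hrich : ∀ n, 2 ^ n ≤ Nat.count (fun j => χ (natToBits (n + 2) j)) (2 ^ (n + 2)) := by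
    intro n
    have hcard : 2 ^ (n + 2) ≤ 3 * {x | χ x = true ∧ x.length = n + 2}.ncard := hdense (n + 2)
    rw [ncard_setOf_length_eq, pow_add] at hcard
    rw [pow_add]
    omega
  refine ⟨fun d => (rankDecode χ 2 d : Part (List Bool)).bind univDecomp,
    optimalPlain_of_simulates ?_ fun D hD => ?_, fun d hd => ?_⟩
  · exact (Computable.ofOption (computable_rankDecode hχ 2)).bind
      (partrec_univDecomp.comp Computable.snd)
  · obtain ⟨c, hc⟩ := exists_simulates_univDecomp hD
    exact ⟨c + 2, (simulates_bind_of_surjective fun y =>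
      (exists_rankDecode_eq hrich y).imp fun _ h => ⟨h.1, h.2.le⟩).trans hc⟩
  · by_contra hχd
    obtain ⟨hR, -⟩ := hd
    simp [rankDecode_eq_none (Bool.eq_false_iff.2 hχd)] at hR
end

section
/- For every computably decidable set A of binary strings such that for every n the number of strings of length n in A is at least 2^n/3 (i.e., 3·|A ∩ {0,1}^n| ≥ 2^n), there exists a total computable injective function a : List Bool → List Bool such that for every string p, a(p) ∈ A and the length of a(p) equals the length of p plus 2. -/
/-!
List the strings of length `n` as `boolLists n`, and the strings of length `n + 2` in `A` by
filtering `boolLists (n + 2)`. Density gives `3 |A ∩ {0,1}^(n+2)| ≥ 4 · 2^n`, so this filtered list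
has at least `2^n` entries, and `p` can be sent to the entry whose index is the index of `p` in
`boolLists p.length`. Every step is a list operation driven by the decision procedure for `A`,
so the map is computable, and it is injective because both lists are duplicate-free.
-/

namespace Computable

variable {α β σ : Type*} [Primcodable α] [Primcodable β] [Primcodable σ]

theorem list_foldl {f : α → List β} {g : α → σ} {h : α → σ × β → σ}
    (hf : Computable f) (hg : Computable g) (hh : Computable₂ h) :
    Computable fun a => (f a).foldl (fun s b => h a (s, b)) (g a) := by
  have step : Computable fun x : α × ℕ × σ =>
      (f x.1)[x.2.1]?.elim x.2.2 fun b => h x.1 (x.2.2, b) :=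
    (option_casesOn (list_getElem?.comp (hf.comp fst) (fst.comp snd)) (snd.comp snd)
      (hh.comp (fst.comp fst) (pair (snd.comp (snd.comp fst)) snd)).to₂).of_eq
      fun x => by cases (f x.1)[x.2.1]? <;> rfl
  refine (nat_rec (list_length.comp hf) hg step.to₂).of_eq fun a => ?_
  suffices ∀ n, Nat.rec (motive := fun _ => σ) (g a)
      (fun n s => (f a)[n]?.elim s fun b => h a (s, b)) n =
      ((f a).take n).foldl (fun s b => h a (s, b)) (g a) by
    simpa using this (f a).length
  intro n
  induction n with
  | zero => rfl
  | succ n ih =>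
    rw [List.take_add_one, List.foldl_append, ← ih]
    cases hn : (f a)[n]? <;> simp [hn]

theorem list_filter {f : α → List β} {q : α → β → Bool}
    (hf : Computable f) (hq : Computable₂ q) :
    Computable fun a => (f a).filter (q a) := by
  have step : Computable₂ fun a (p : List β × β) => bif q a p.2 then p.1 ++ [p.2] else p.1 :=
    (cond (hq.comp fst (snd.comp snd)) (list_concat.comp (fst.comp snd) (snd.comp snd))
      (fst.comp snd)).to₂
  refine (list_foldl hf (const []) step).of_eq fun a => ?_
  suffices ∀ (l s : List β), l.foldl (fun s b => bif q a b then s ++ [b] else s) s =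
      s ++ l.filter (q a) by simpa using this (f a) []
  intro l
  induction l with
  | nil => simp
  | cons b l ih => intro s; cases hb : q a b <;> simp [ih, hb]

end Computable

def boolLists : ℕ → List (List Bool)
  | 0 => [[]]
  | n + 1 => (boolLists n).map (false :: ·) ++ (boolLists n).map (true :: ·)

theorem mem_boolLists {n : ℕ} {x : List Bool} : x ∈ boolLists n ↔ x.length = n := by
  induction n generalizing x with
  | zero => cases x <;> simp [boolLists]
  | succ n ih => cases x with
    | nil => simp [boolLists]
    | cons b x => cases b <;> simp [boolLists, ih]

theorem nodup_boolLists (n : ℕ) : (boolLists n).Nodup := by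
  induction n with
  | zero => simp [boolLists]
  | succ n ih =>
    refine .append (ih.map fun _ _ => List.cons_injective.eq_iff.1)
      (ih.map fun _ _ => List.cons_injective.eq_iff.1) ?_
    simp [List.disjoint_left]

theorem length_boolLists (n : ℕ) : (boolLists n).length = 2 ^ n := by
  induction n with
  | zero => rfl
  | succ n ih => simp [boolLists, ih, pow_succ, mul_two]

theorem computable_boolLists : Computable boolLists := by
  have step : Primrec fun l : List (List Bool) => l.map (false :: ·) ++ l.map (true :: ·) :=
    Primrec.list_append.comp
      (Primrec.list_map .id (Primrec.list_cons.comp₂ (Primrec₂.const false) Primrec₂.right))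
      (Primrec.list_map .id (Primrec.list_cons.comp₂ (Primrec₂.const true) Primrec₂.right))
  refine (Computable.nat_rec .id (.const [[]])
    (step.to_comp.comp (Computable.snd.comp .snd)).to₂).of_eq fun n => ?_
  induction n with
  | zero => rfl
  | succ n ih => simp only [id] at ih; simp [boolLists, ← ih]

theorem ncard_setOf_mem_and_length_eq (A : Set (List Bool)) [DecidablePred (· ∈ A)] (n : ℕ) :
    {x | x ∈ A ∧ x.length = n}.ncard = ((boolLists n).filter (· ∈ A)).length := by
  have hset : {x | x ∈ A ∧ x.length = n} = ↑((boolLists n).filter (· ∈ A)).toFinset := by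
    ext x
    simp [mem_boolLists, and_comm]
  rw [hset, Set.ncard_coe_finset, List.toFinset_card_of_nodup ((nodup_boolLists n).filter _)]

namespace List

variable {α β : Type*} [BEq α] [LawfulBEq α] {l : List α} {l' : List β}

theorem getD_idxOf_mem {x : α} (hx : x ∈ l) (hlen : l.length ≤ l'.length) (d : β) :
    l'.getD (l.idxOf x) d ∈ l' := by
  rw [getD_eq_getElem _ _ ((idxOf_lt_length_iff.2 hx).trans_le hlen)]
  exact getElem_mem _

theorem injOn_getD_idxOf (hl' : l'.Nodup) (hlen : l.length ≤ l'.length) (d : β) :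
    Set.InjOn (fun x => l'.getD (l.idxOf x) d) {x | x ∈ l} := by
  intro x hx y hy hxy
  simp only [getD_eq_getElem _ _ ((idxOf_lt_length_iff.2 hx).trans_le hlen),
    getD_eq_getElem _ _ ((idxOf_lt_length_iff.2 hy).trans_le hlen)] at hxy
  exact (idxOf_inj hx).1 (hl'.getElem_inj_iff.1 hxy)

end List

section LayerEmbedding

variable (q : List Bool → Bool) (k : ℕ)

def layerEmbedding (p : List Bool) : List Bool :=
  ((boolLists (p.length + k)).filter q).getD ((boolLists p.length).idxOf p) []

theorem computable_layerEmbedding (hq : Computable q) : Computable (layerEmbedding q k) := by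
  unfold layerEmbedding
  -- `Primrec.list_idxOf` is stated for the `BEq` instance derived from `DecidableEq`.
  rw [lawful_beq_subsingleton List.instBEq instBEqOfDecidableEq]
  exact (Primrec.list_getD []).to_comp.comp
    (Computable.list_filter
      (computable_boolLists.comp (Primrec.nat_add.comp .list_length (.const k)).to_comp)
      (hq.comp .snd).to₂)
    ((Primrec.list_idxOf).to_comp.comp .id (computable_boolLists.comp .list_length))

variable {q k}

theorem layerEmbedding_spec {p : List Bool}
    (h : 2 ^ p.length ≤ ((boolLists (p.length + k)).filter q).length) :
    q (layerEmbedding q k p) ∧ (layerEmbedding q k p).length = p.length + k := by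
  have hmem : layerEmbedding q k p ∈ (boolLists (p.length + k)).filter q :=
    List.getD_idxOf_mem (mem_boolLists.2 rfl) ((length_boolLists _).trans_le h) []
  simpa [List.mem_filter, mem_boolLists, and_comm] using hmem

theorem injective_layerEmbedding
    (h : ∀ n, 2 ^ n ≤ ((boolLists (n + k)).filter q).length) :
    Function.Injective (layerEmbedding q k) := by
  intro p p' hpp'
  have hlen : p.length = p'.length := by
    have := congrArg List.length hpp'
    rw [(layerEmbedding_spec (h p.length)).2, (layerEmbedding_spec (h p'.length)).2] at this
    omega
  refine List.injOn_getD_idxOf ((nodup_boolLists _).filter q)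
    ((length_boolLists _).trans_le (h p.length)) [] (mem_boolLists.2 rfl)
    (mem_boolLists.2 hlen.symm) ?_
  simpa [layerEmbedding, hlen] using hpp'

end LayerEmbedding

theorem stmt3 (A : Set (List Bool)) (hA : ComputablePred (· ∈ A))
    (hdense : ∀ n : ℕ, 2 ^ n ≤ 3 * ({x | x ∈ A ∧ x.length = n} : Set (List Bool)).ncard) :
    ∃ a : List Bool → List Bool, Computable a ∧ Function.Injective a ∧
      ∀ p : List Bool, a p ∈ A ∧ (a p).length = p.length + 2 := by
  obtain ⟨_, hdec⟩ := hA
  have hlayer : ∀ n, 2 ^ n ≤ ((boolLists (n + 2)).filter (· ∈ A)).length := by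
    intro n
    have := hdense (n + 2)
    rw [ncard_setOf_mem_and_length_eq, pow_add] at this
    omega
  refine ⟨layerEmbedding (· ∈ A) 2, computable_layerEmbedding _ _ hdec,
    injective_layerEmbedding hlayer, fun p => ?_⟩
  simpa using layerEmbedding_spec (hlayer p.length)
end

section
/- Kraft–Chaitin lemma: for every total computable sequence n : ℕ → ℕ with ∑_{i} 2^{-n(i)} ≤ 1, there exists a total computable sequence x : ℕ → List Bool of binary strings such that for every i the length of x(i) equals n(i), and for all i ≠ j the string x(i) is not a prefix of x(j) (in particular all x(i) are distinct and form a prefix-free set). -/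
/-!
Greedy online allocation. Keep a list of *free* strings, pairwise prefix-incomparable and of
pairwise distinct lengths, which together with the codewords chosen so far tile Cantor space, so
that their weight `∑ 2^-|w|` is `1 - ∑_{j<i} 2^-n(j)`. A request of length `m` is served by the
longest free `w` with `|w| ≤ m`: the codeword is `w 0^(m-|w|)` and `w` is replaced by the strings
`w 0^a 1`, `a < m - |w|`, whose lengths `|w|+1, …, m` are not taken by any other free string.
Such a `w` exists because free strings of distinct lengths all `> m` weigh less than `2^-m`.
-/

open Finset

namespace KraftChaitin

section Incomparable

variable {α : Type*}

def Incomparable (u v : List α) : Prop := ¬ u <+: v ∧ ¬ v <+: u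

theorem Incomparable.symm {u v : List α} (h : Incomparable u v) : Incomparable v u :=
  ⟨h.2, h.1⟩

theorem Incomparable.of_prefix_right {u v w : List α} (h : Incomparable u v) (hvw : v <+: w) :
    Incomparable u w :=
  ⟨fun huw => (List.prefix_or_prefix_of_prefix huw hvw).elim h.1 h.2,
    fun hwu => h.2 (hvw.trans hwu)⟩

theorem incomparable_append_cons {a b : α} (hab : a ≠ b) (w s t : List α) :
    Incomparable (w ++ a :: s) (w ++ b :: t) := by
  simp only [Incomparable, List.prefix_append_right_inj, List.cons_prefix_cons]
  exact ⟨fun h => hab h.1, fun h => hab h.1.symm⟩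

end Incomparable

def piece (w : List Bool) (a : ℕ) : List Bool := w ++ List.replicate a false ++ [true]

@[simp] theorem length_piece (w : List Bool) (a : ℕ) :
    (piece w a).length = w.length + a + 1 := by
  simp [piece, Nat.add_assoc]

theorem prefix_piece (w : List Bool) (a : ℕ) : w <+: piece w a := by
  rw [piece, List.append_assoc]
  exact List.prefix_append _ _

theorem incomparable_piece {a b : ℕ} (hab : a < b) (w s : List Bool) :
    Incomparable (piece w a) (w ++ List.replicate b false ++ s) := by
  obtain ⟨c, rfl⟩ := Nat.exists_eq_add_of_lt hab
  have hsplit : w ++ List.replicate (a + c + 1) false ++ s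
      = w ++ List.replicate a false ++ false :: (List.replicate c false ++ s) := by
    rw [Nat.add_assoc, List.replicate_add, List.replicate_succ]
    simp only [List.append_assoc, List.cons_append]
  rw [piece, hsplit]
  exact incomparable_append_cons (by decide) _ _ _

/-- Together with `w 0^(m-|w|)`, these strings tile the cone above `w`. -/
def pieces (m : ℕ) (w : List Bool) : List (List Bool) :=
  (List.range (m - w.length)).reverse.map (piece w)

theorem mem_pieces {m : ℕ} {w v : List Bool} :
    v ∈ pieces m w ↔ ∃ a < m - w.length, piece w a = v := by
  simp [pieces]

/-- On a list sorted by decreasing length this picks the longest `w` with `|w| ≤ m`. -/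
def allocate (m : ℕ) : List (List Bool) → List Bool × List (List Bool)
  | [] => ([], [])
  | w :: L => if m < w.length then ((allocate m L).1, w :: (allocate m L).2)
      else (w ++ List.replicate (m - w.length) false, pieces m w ++ L)

theorem allocate_eq_of_exists (m : ℕ) {L : List (List Bool)} (hL : ∃ w ∈ L, w.length ≤ m) :
    ∃ pre w post, L = pre ++ w :: post ∧ w.length ≤ m ∧ (∀ u ∈ pre, m < u.length) ∧
      allocate m L = (w ++ List.replicate (m - w.length) false, pre ++ (pieces m w ++ post)) := by
  induction L with
  | nil => simp at hL
  | cons w L ih =>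
    by_cases hw : m < w.length
    · obtain ⟨pre, v, post, rfl, hv, hpre, heq⟩ : ∃ pre w post, L = pre ++ w :: post ∧ _ :=
        ih (by simpa [hw.not_ge] using hL)
      refine ⟨w :: pre, v, post, rfl, hv, ?_, ?_⟩
      · simpa [hw] using hpre
      · simp [allocate, hw, heq]
    · exact ⟨[], w, L, rfl, by omega, by simp, by simp [allocate, hw]⟩

def IsFreeList (L : List (List Bool)) : Prop :=
  L.Pairwise fun u v => v.length < u.length ∧ Incomparable u v

noncomputable def kraftSum (L : List (List Bool)) : ℝ :=
  (L.map fun w => (1 / 2 : ℝ) ^ w.length).sum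

@[simp] theorem kraftSum_nil : kraftSum [] = 0 := rfl

@[simp] theorem kraftSum_cons (w : List Bool) (L : List (List Bool)) :
    kraftSum (w :: L) = (1 / 2) ^ w.length + kraftSum L := by
  simp [kraftSum]

@[simp] theorem kraftSum_append (L M : List (List Bool)) :
    kraftSum (L ++ M) = kraftSum L + kraftSum M := by
  simp [kraftSum]

theorem sum_half_pow_add_half_pow (c k : ℕ) :
    ((List.range k).map fun a => (1 / 2 : ℝ) ^ (c + a + 1)).sum + (1 / 2) ^ (c + k)
      = (1 / 2) ^ c := by
  induction k with
  | zero => simp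
  | succ k ih =>
    rw [List.sum_range_succ, ← ih]
    ring

theorem kraftSum_pieces {m : ℕ} {w : List Bool} (hw : w.length ≤ m) :
    kraftSum (pieces m w) + (1 / 2) ^ m = (1 / 2) ^ w.length := by
  obtain ⟨k, rfl⟩ := Nat.exists_eq_add_of_le hw
  rw [← sum_half_pow_add_half_pow w.length k]
  simp [kraftSum, pieces, Function.comp_def, Nat.add_assoc]

theorem sum_half_pow_lt_of_forall_lt {m : ℕ} {S : Finset ℕ} (hS : ∀ k ∈ S, m < k) :
    ∑ k ∈ S, (1 / 2 : ℝ) ^ k < (1 / 2) ^ m := by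
  set N := S.sup id + m + 1
  have hsub : S ⊆ Ico (m + 1) N := fun k hk =>
    mem_Ico.2 ⟨hS k hk, by have : k ≤ S.sup id := le_sup (f := id) hk; omega⟩
  have hmN : m + 1 ≤ N := by omega
  calc ∑ k ∈ S, (1 / 2 : ℝ) ^ k ≤ ∑ k ∈ Ico (m + 1) N, (1 / 2 : ℝ) ^ k :=
        sum_le_sum_of_subset_of_nonneg hsub fun _ _ _ => by positivity
    _ = (1 / 2) ^ m - 2 * (1 / 2) ^ N := by
        rw [geom_sum_Ico (by norm_num) hmN]
        ring
    _ < (1 / 2) ^ m := by linarith [pow_pos (one_half_pos (α := ℝ)) N]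

theorem IsFreeList.exists_length_le {m : ℕ} {L : List (List Bool)} (hL : IsFreeList L)
    (hm : (1 / 2) ^ m ≤ kraftSum L) : ∃ w ∈ L, w.length ≤ m := by
  by_contra! hlong
  have hnodup : (L.map List.length).Nodup :=
    List.pairwise_map.2 (List.Pairwise.imp (fun h => h.1.ne') hL)
  have hsum : kraftSum L = ∑ k ∈ (L.map List.length).toFinset, (1 / 2 : ℝ) ^ k := by
    rw [List.sum_toFinset _ hnodup, List.map_map]
    rfl
  exact (sum_half_pow_lt_of_forall_lt (by simpa using hlong)).not_ge (hsum ▸ hm)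

theorem isFreeList_pieces (m : ℕ) (w : List Bool) : IsFreeList (pieces m w) := by
  refine List.pairwise_map.2 (List.pairwise_reverse.2 (List.pairwise_lt_range.imp ?_))
  intro a b hab
  exact ⟨by simp [hab], (incomparable_piece hab w [true]).symm⟩

theorem IsFreeList.replace_pieces {m : ℕ} {pre post : List (List Bool)} {w : List Bool}
    (hL : IsFreeList (pre ++ w :: post)) (hw : w.length ≤ m)
    (hpre : ∀ u ∈ pre, m < u.length) : IsFreeList (pre ++ (pieces m w ++ post)) := by
  obtain ⟨hfree_pre, hfree_wpost, hcross⟩ := List.pairwise_append.1 hL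
  obtain ⟨hw_post, hfree_post⟩ := List.pairwise_cons.1 hfree_wpost
  refine List.pairwise_append.2
    ⟨hfree_pre, List.pairwise_append.2 ⟨isFreeList_pieces m w, hfree_post, ?_⟩, ?_⟩
  · intro v hv t ht
    obtain ⟨a, -, rfl⟩ := mem_pieces.1 hv
    obtain ⟨hlen, hinc⟩ := hw_post t ht
    exact ⟨by simp; omega, (hinc.symm.of_prefix_right (prefix_piece w a)).symm⟩
  · intro u hu v hv
    rcases List.mem_append.1 hv with hv | hv
    · obtain ⟨a, ha, rfl⟩ := mem_pieces.1 hv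
      have := hpre u hu
      exact ⟨by simp; omega,
        (hcross u hu w List.mem_cons_self).2.of_prefix_right (prefix_piece w a)⟩
    · exact hcross u hu v (List.mem_cons_of_mem _ hv)

section allocate

variable {m : ℕ} {L : List (List Bool)}

theorem length_allocate_fst (hex : ∃ w ∈ L, w.length ≤ m) : (allocate m L).1.length = m := by
  obtain ⟨pre, w, post, -, hw, -, heq⟩ := allocate_eq_of_exists m hex
  simp [heq, hw]

theorem exists_prefix_allocate_fst (hex : ∃ w ∈ L, w.length ≤ m) :
    ∃ w ∈ L, w <+: (allocate m L).1 := by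
  obtain ⟨pre, w, post, rfl, -, -, heq⟩ := allocate_eq_of_exists m hex
  exact ⟨w, by simp, by simp [heq]⟩

theorem exists_prefix_of_mem_allocate_snd (hex : ∃ w ∈ L, w.length ≤ m) :
    ∀ v ∈ (allocate m L).2, ∃ u ∈ L, u <+: v := by
  obtain ⟨pre, w, post, rfl, -, -, heq⟩ := allocate_eq_of_exists m hex
  intro v hv
  simp only [heq, List.mem_append] at hv
  rcases hv with hv | hv | hv
  · exact ⟨v, by simp [hv], List.prefix_refl v⟩
  · obtain ⟨a, -, rfl⟩ := mem_pieces.1 hv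
    exact ⟨w, by simp, prefix_piece w a⟩
  · exact ⟨v, by simp [hv], List.prefix_refl v⟩

theorem IsFreeList.allocate_snd (hL : IsFreeList L) (hex : ∃ w ∈ L, w.length ≤ m) :
    IsFreeList (allocate m L).2 := by
  obtain ⟨pre, w, post, rfl, hw, hpre, heq⟩ := allocate_eq_of_exists m hex
  rw [heq]
  exact hL.replace_pieces hw hpre

theorem kraftSum_allocate (hex : ∃ w ∈ L, w.length ≤ m) :
    kraftSum (allocate m L).2 + (1 / 2) ^ m = kraftSum L := by
  obtain ⟨pre, w, post, rfl, hw, -, heq⟩ := allocate_eq_of_exists m hex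
  have := kraftSum_pieces hw
  simp only [heq, kraftSum_append, kraftSum_cons]
  linarith

theorem IsFreeList.incomparable_allocate (hL : IsFreeList L) (hex : ∃ w ∈ L, w.length ≤ m) :
    ∀ v ∈ (allocate m L).2, Incomparable (allocate m L).1 v := by
  obtain ⟨pre, w, post, rfl, -, -, heq⟩ := allocate_eq_of_exists m hex
  obtain ⟨-, hfree_wpost, hcross⟩ := List.pairwise_append.1 hL
  have hpad : w <+: w ++ List.replicate (m - w.length) false := List.prefix_append _ _
  intro v hv
  simp only [heq, List.mem_append] at hv ⊢
  rcases hv with hv | hv | hv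
  · exact ((hcross v hv w List.mem_cons_self).2.of_prefix_right hpad).symm
  · obtain ⟨a, ha, rfl⟩ := mem_pieces.1 hv
    simpa using (incomparable_piece ha w []).symm
  · exact ((List.rel_of_pairwise_cons hfree_wpost hv).2.symm.of_prefix_right hpad).symm

end allocate

def freeList (n : ℕ → ℕ) : ℕ → List (List Bool)
  | 0 => [[]]
  | i + 1 => (allocate (n i) (freeList n i)).2

def codeword (n : ℕ → ℕ) (i : ℕ) : List Bool := (allocate (n i) (freeList n i)).1

structure Invariant (n : ℕ → ℕ) (i : ℕ) : Prop where
  isFreeList : IsFreeList (freeList n i)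
  kraftSum_add_sum : kraftSum (freeList n i) + ∑ j ∈ range i, (1 / 2 : ℝ) ^ n j = 1
  incomparable : ∀ j < i, ∀ v ∈ freeList n i, Incomparable (codeword n j) v

section invariant

variable {n : ℕ → ℕ}

theorem Invariant.exists_length_le {i : ℕ} (h : Invariant n i)
    (hkraft : ∑ j ∈ range (i + 1), (1 / 2 : ℝ) ^ n j ≤ 1) :
    ∃ w ∈ freeList n i, w.length ≤ n i := by
  rw [sum_range_succ] at hkraft
  exact h.isFreeList.exists_length_le (by linarith [h.kraftSum_add_sum])

theorem invariant (hkraft : ∀ k, ∑ j ∈ range k, (1 / 2 : ℝ) ^ n j ≤ 1) :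
    ∀ i, Invariant n i
  | 0 => ⟨List.pairwise_singleton _ _, by simp [freeList], by simp⟩
  | i + 1 => by
    have h := invariant hkraft i
    have hex := h.exists_length_le (hkraft (i + 1))
    refine ⟨h.isFreeList.allocate_snd hex, ?_, fun j hj v hv => ?_⟩
    · rw [freeList, sum_range_succ]
      linarith [h.kraftSum_add_sum, kraftSum_allocate hex]
    · rcases Nat.lt_succ_iff_lt_or_eq.1 hj with hj | rfl
      · obtain ⟨u, hu, huv⟩ := exists_prefix_of_mem_allocate_snd hex v hv
        exact (h.incomparable j hj u hu).of_prefix_right huv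
      · exact h.isFreeList.incomparable_allocate hex v hv

theorem length_codeword (hkraft : ∀ k, ∑ j ∈ range k, (1 / 2 : ℝ) ^ n j ≤ 1) (i : ℕ) :
    (codeword n i).length = n i :=
  length_allocate_fst ((invariant hkraft i).exists_length_le (hkraft (i + 1)))

theorem incomparable_codeword (hkraft : ∀ k, ∑ j ∈ range k, (1 / 2 : ℝ) ^ n j ≤ 1)
    {j k : ℕ} (hjk : j < k) : Incomparable (codeword n j) (codeword n k) := by
  have hk := invariant hkraft k
  obtain ⟨w, hw, hwk⟩ :=
    exists_prefix_allocate_fst (hk.exists_length_le (hkraft (k + 1)))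
  exact (hk.incomparable j hjk w hw).of_prefix_right hwk

end invariant

theorem sum_range_half_pow_le_one {n : ℕ → ℕ} (hsum : ∑' i, ((2 : ENNReal) ^ n i)⁻¹ ≤ 1)
    (k : ℕ) : ∑ j ∈ range k, (1 / 2 : ℝ) ^ n j ≤ 1 := by
  have h := ENNReal.toReal_mono ENNReal.one_ne_top
    ((ENNReal.sum_le_tsum (range k)).trans hsum)
  simpa [ENNReal.toReal_sum] using h

section computability

open Primrec

theorem primrec_replicate_false : Primrec fun k : ℕ => List.replicate k false :=
  (list_map list_range (Primrec₂.const false)).of_eq fun k => by simp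

theorem primrec_pieces : Primrec₂ pieces :=
  list_map (list_reverse.comp (list_range.comp (nat_sub.comp fst (list_length.comp snd))))
    (list_append.comp (list_append.comp (snd.comp fst) (primrec_replicate_false.comp snd))
      (const [true])).to₂

theorem primrec_allocate : Primrec₂ allocate := by
  have hstep : Primrec₂ fun (m : ℕ)
      (p : List Bool × List (List Bool) × (List Bool × List (List Bool))) =>
      if m < p.1.length then (p.2.2.1, p.1 :: p.2.2.2)
      else (p.1 ++ List.replicate (m - p.1.length) false, pieces m p.1 ++ p.2.1) :=
    ite (nat_lt.comp fst (list_length.comp (fst.comp snd)))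
      (pair (fst.comp (snd.comp (snd.comp snd)))
        (list_cons.comp (fst.comp snd) (snd.comp (snd.comp (snd.comp snd)))))
      (pair
        (list_append.comp (fst.comp snd)
          (primrec_replicate_false.comp (nat_sub.comp fst (list_length.comp (fst.comp snd)))))
        (list_append.comp (primrec_pieces.comp fst (fst.comp snd)) (fst.comp (snd.comp snd))))
  refine (list_rec snd (const ([], [])) (hstep.comp (fst.comp fst) snd).to₂).of_eq
    fun ⟨m, L⟩ => ?_
  induction L with
  | nil => rfl
  | cons w L ih => simp only [allocate, ← ih]

end computability

theorem computable_freeList {n : ℕ → ℕ} (hn : Computable n) : Computable (freeList n) := by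
  have hstep : Computable₂ fun (_ : ℕ) (p : ℕ × List (List Bool)) =>
      (allocate (n p.1) p.2).2 :=
    (Computable.snd.comp (primrec_allocate.to_comp.comp
      (hn.comp (Computable.fst.comp Computable.snd)) (Computable.snd.comp Computable.snd))).to₂
  refine (Computable.nat_rec Computable.id (Computable.const [[]]) hstep).of_eq fun i => ?_
  induction i with
  | zero => rfl
  | succ i ih => rw [freeList, ← ih]; rfl

theorem computable_codeword {n : ℕ → ℕ} (hn : Computable n) : Computable (codeword n) :=
  Computable.fst.comp (primrec_allocate.to_comp.comp hn (computable_freeList hn))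

end KraftChaitin

/-- Kraft–Chaitin lemma -/
theorem stmt6 (n : ℕ → ℕ) (hn : Computable n)
    (hsum : (∑' i : ℕ, ((2 : ENNReal) ^ n i)⁻¹) ≤ 1) :
    ∃ x : ℕ → List Bool, Computable x ∧
      (∀ i : ℕ, (x i).length = n i) ∧
      ∀ i j : ℕ, i ≠ j → ¬ (x i <+: x j) := by
  have hkraft := KraftChaitin.sum_range_half_pow_le_one hsum
  refine ⟨KraftChaitin.codeword n, KraftChaitin.computable_codeword hn,
    KraftChaitin.length_codeword hkraft, fun i j hij => ?_⟩
  rcases hij.lt_or_gt with h | h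
  · exact (KraftChaitin.incomparable_codeword hkraft h).1
  · exact (KraftChaitin.incomparable_codeword hkraft h).2
end

section
/- There exists a computably decidable set A of binary strings such that (1) for every n, 3·|A ∩ {0,1}^n| ≥ 2^n, and (2) for every k and every set X of binary strings of length k with 3·|X| ≥ 2^k, there are infinitely many n ≥ k such that for every m with n ≤ m ≤ 2n, the set A represents X at level m. -/
open scoped Classical

/-- `A` represents `X` at level `m`: the strings of length `m` in `A` are exactly
the strings of length `m` having a prefix in `X`. -/
def RepresentsAt (A X : Set (List Bool)) (m : ℕ) : Prop :=
  {l : List Bool | l.length = m ∧ l ∈ A} =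
    {l : List Bool | l.length = m ∧ ∃ x ∈ X, x <+: l}

/-!
Split the levels into the consecutive blocks `[2^i - 1, 2 (2^i - 1)]` and let block `i` serve
the `i.unpair.1`-th code `(k, L)` of a finite set of strings; every code is served by infinitely
many blocks. On the levels `m ≥ k` of a block whose code lists at least a third of `{0,1}^k`, `A`
consists of the strings whose length-`k` prefix is listed; on all other levels `A` contains every
string. Each level of `A` therefore has density at least `1/3`, and a dense `X` is represented
on every level of each of the infinitely many blocks serving its code.
-/

open Encodable

namespace List

theorem ncard_setOf_length_eq {α : Type*} [Fintype α] (n : ℕ) :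
    {l : List α | l.length = n}.ncard = Fintype.card α ^ n := by
  rw [← Nat.card_coe_set_eq]
  exact (Nat.card_eq_fintype_card (α := List.Vector α n)).trans (card_vector n)

theorem ncard_setOf_length_take_mem {α : Type*} [Fintype α] {k m : ℕ} (hkm : k ≤ m)
    (S : Set (List α)) :
    {l : List α | l.length = m ∧ l.take k ∈ S}.ncard =
      {x ∈ S | x.length = k}.ncard * Fintype.card α ^ (m - k) := by
  have hsplit : {l : List α | l.length = m ∧ l.take k ∈ S} =
      (fun p => p.1 ++ p.2) '' ({x ∈ S | x.length = k} ×ˢ {y | y.length = m - k}) := by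
    ext l
    constructor
    · rintro ⟨hl, hS⟩
      exact ⟨(l.take k, l.drop k), ⟨⟨hS, by simp [hl, hkm]⟩, by simp [hl]⟩, l.take_append_drop k⟩
    · rintro ⟨⟨x, y⟩, ⟨⟨hS, hx⟩, hy⟩, rfl⟩
      simp only [Set.mem_ofPred_eq] at hy
      refine ⟨by simp [hx, hy, hkm], ?_⟩
      rwa [List.take_left' hx]
  have hinj : Set.InjOn (fun p : List α × List α => p.1 ++ p.2)
      ({x ∈ S | x.length = k} ×ˢ {y | y.length = m - k}) := by
    rintro ⟨x, y⟩ ⟨⟨-, hx⟩, -⟩ ⟨x', y'⟩ ⟨⟨-, hx'⟩, -⟩ h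
    obtain ⟨rfl, rfl⟩ := List.append_inj h (hx.trans hx'.symm)
    rfl
  rw [hsplit, hinj.ncard_image, Set.ncard_prod, ncard_setOf_length_eq]

end List

section Primrec

variable {α β : Type*} [Primcodable α] [Primcodable β]

theorem Primrec.two_pow : Primrec (2 ^ · : ℕ → ℕ) :=
  (Primrec₂.unpaired'.1 Nat.Primrec.pow).comp (Primrec.const 2) Primrec.id

theorem PrimrecRel.list_mem : PrimrecRel fun (a : α) (L : List α) => a ∈ L :=
  (PrimrecRel.exists_mem_list Primrec.eq).swap.of_eq fun a L => by simp [Function.swap]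

theorem PrimrecPred.list_nodup : PrimrecPred (@List.Nodup α) := by
  have hcount : PrimrecRel fun (a : α) (L : List α) => (L.filter (· = a)).length = 1 :=
    Primrec.eq.comp (Primrec.list_length.comp (PrimrecRel.listFilter Primrec.eq).swap)
      (Primrec.const 1)
  refine (hcount.forall_mem_list.comp Primrec.id Primrec.id).of_eq fun L => ?_
  rw [List.nodup_iff_count_eq_one]
  simp only [List.count_eq_length_filter]
  rfl

theorem PrimrecPred.forall_mem_option {f : α → Option β} {R : α → β → Prop} (hf : Primrec f)
    (hR : PrimrecRel R) : PrimrecPred fun a => ∀ b ∈ f a, R a b :=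
  (hR.swap.forall_mem_list.comp (Primrec.optionToList.comp hf) Primrec.id).of_eq fun a => by
    simp [Function.swap]

theorem PrimrecPred.imp {p q : α → Prop} (hp : PrimrecPred p) (hq : PrimrecPred q) :
    PrimrecPred fun a => p a → q a :=
  (hp.not.or hq).of_eq fun _ => imp_iff_not_or.symm

end Primrec

namespace DenseRepresentation

def IsDenseCode (c : ℕ × List (List Bool)) : Prop :=
  (∀ x ∈ c.2, x.length = c.1) ∧ c.2.Nodup ∧ 2 ^ c.1 ≤ 3 * c.2.length

def blockOf (m : ℕ) : ℕ := Nat.log 2 (m + 1)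

def codeAt (m : ℕ) : Option (ℕ × List (List Bool)) := decode (blockOf m).unpair.1

def denseSet : Set (List Bool) :=
  {l | ∀ c ∈ codeAt l.length, c.1 ≤ l.length ∧ IsDenseCode c → l.take c.1 ∈ c.2}

theorem blockOf_eq_iff {m i : ℕ} : blockOf m = i ↔ 2 ^ i - 1 ≤ m ∧ m ≤ 2 * (2 ^ i - 1) := by
  rw [blockOf, Nat.log_eq_iff (Or.inr ⟨one_lt_two, m.succ_ne_zero⟩), pow_succ]
  have := Nat.one_le_two_pow (n := i)
  omega

theorem codeAt_of_blockOf_eq {m : ℕ} (c : ℕ × List (List Bool)) (M : ℕ)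
    (hm : blockOf m = Nat.pair (encode c) M) : codeAt m = some c := by
  simp [codeAt, hm, encodek]

theorem IsDenseCode.ncard {c : ℕ × List (List Bool)} (hc : IsDenseCode c) :
    {x | x ∈ c.2 ∧ x.length = c.1}.ncard = c.2.length := by
  have hset : {x | x ∈ c.2 ∧ x.length = c.1} = ↑c.2.toFinset := by
    ext x
    simpa using hc.1 x
  rw [hset, Set.ncard_coe_finset, List.toFinset_card_of_nodup hc.2.1]

theorem setOf_length_mem_denseSet {m : ℕ} {c : ℕ × List (List Bool)} (hc : codeAt m = some c)
    (hkm : c.1 ≤ m) (hdense : IsDenseCode c) :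
    {l | l.length = m ∧ l ∈ denseSet} = {l | l.length = m ∧ l.take c.1 ∈ {x | x ∈ c.2}} := by
  ext l
  simp only [denseSet, Set.mem_ofPred_eq]
  constructor
  · rintro ⟨rfl, hl⟩
    exact ⟨rfl, hl c hc ⟨hkm, hdense⟩⟩
  · rintro ⟨rfl, hl⟩
    refine ⟨rfl, fun c' hc' _ => ?_⟩
    rw [hc, Option.mem_some_iff] at hc'
    exact hc' ▸ hl

theorem two_pow_le_three_mul_ncard_denseSet (m : ℕ) :
    2 ^ m ≤ 3 * {l | l.length = m ∧ l ∈ denseSet}.ncard := by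
  by_cases h : ∃ c ∈ codeAt m, c.1 ≤ m ∧ IsDenseCode c
  · obtain ⟨c, hc, hkm, hdense⟩ := h
    rw [setOf_length_mem_denseSet hc hkm hdense, List.ncard_setOf_length_take_mem hkm,
      Set.sep_ofPred, hdense.ncard, Fintype.card_bool]
    calc 2 ^ m = 2 ^ c.1 * 2 ^ (m - c.1) := by rw [← pow_add, Nat.add_sub_cancel' hkm]
      _ ≤ 3 * c.2.length * 2 ^ (m - c.1) := Nat.mul_le_mul_right _ hdense.2.2
      _ = 3 * (c.2.length * 2 ^ (m - c.1)) := Nat.mul_assoc _ _ _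
  · push Not at h
    have hall : {l | l.length = m ∧ l ∈ denseSet} = {l | l.length = m} := by
      ext l
      simp only [denseSet, Set.mem_ofPred_eq, and_iff_left_iff_imp]
      rintro rfl c hc ⟨hkm, hdense⟩
      exact absurd hdense (h c hc hkm)
    rw [hall, List.ncard_setOf_length_eq, Fintype.card_bool]
    omega

theorem representsAt_denseSet {m : ℕ} {c : ℕ × List (List Bool)} (hc : codeAt m = some c)
    (hkm : c.1 ≤ m) (hdense : IsDenseCode c) : RepresentsAt denseSet {x | x ∈ c.2} m := by
  rw [RepresentsAt, setOf_length_mem_denseSet hc hkm hdense]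
  ext l
  simp only [Set.mem_ofPred_eq, and_congr_right_iff]
  rintro rfl
  constructor
  · exact fun hl => ⟨_, hl, l.take_prefix c.1⟩
  · rintro ⟨x, hx, hpre⟩
    have hxl := List.prefix_iff_eq_take.1 hpre
    rw [hdense.1 x hx] at hxl
    rwa [← hxl]

theorem exists_isDenseCode {k : ℕ} {X : Set (List Bool)} (hX : ∀ x ∈ X, x.length = k)
    (hcard : 2 ^ k ≤ 3 * X.ncard) : ∃ L, IsDenseCode (k, L) ∧ {x | x ∈ L} = X := by
  obtain ⟨s, rfl⟩ := (Set.finite_of_ncard_pos (by have := k.one_le_two_pow; omega : 0 < X.ncard)).exists_finset_coe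
  refine ⟨s.toList, ⟨fun x hx => hX x (by simpa using hx), s.nodup_toList, ?_⟩, by simp⟩
  rwa [Finset.length_toList, ← Set.ncard_coe_finset]

theorem primrec_blockOf : Primrec blockOf := by
  refine Primrec.of_graph ⟨_, Primrec.succ, fun m => Nat.log_le_self 2 (m + 1)⟩ ?_
  have : PrimrecRel fun m i : ℕ => 2 ^ i ≤ m + 1 ∧ m + 1 < 2 ^ (i + 1) :=
    (Primrec.nat_le.comp (Primrec.two_pow.comp Primrec.snd) (Primrec.succ.comp Primrec.fst)).and
      (Primrec.nat_lt.comp (Primrec.succ.comp Primrec.fst)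
        (Primrec.two_pow.comp (Primrec.succ.comp Primrec.snd)))
  exact this.of_eq fun m i => (Nat.log_eq_iff (Or.inr ⟨one_lt_two, m.succ_ne_zero⟩)).symm

theorem primrecPred_isDenseCode : PrimrecPred IsDenseCode := by
  have hlen : PrimrecRel fun (x : List Bool) (k : ℕ) => x.length = k :=
    Primrec.eq.comp (Primrec.list_length.comp Primrec.fst) Primrec.snd
  exact (hlen.forall_mem_list.comp Primrec.snd Primrec.fst).and
    (PrimrecPred.list_nodup.comp Primrec.snd |>.and <|
      Primrec.nat_le.comp (Primrec.two_pow.comp Primrec.fst)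
        (Primrec.nat_mul.comp (Primrec.const 3) (Primrec.list_length.comp Primrec.snd)))

theorem computablePred_mem_denseSet : ComputablePred (· ∈ denseSet) := by
  have hcode : Primrec fun l : List Bool => codeAt l.length :=
    Primrec.decode.comp <| Primrec.fst.comp <| Primrec.unpair.comp <|
      primrec_blockOf.comp Primrec.list_length
  have hguard : PrimrecRel fun (l : List Bool) (c : ℕ × List (List Bool)) =>
      c.1 ≤ l.length ∧ IsDenseCode c :=
    (Primrec.nat_le.comp (Primrec.fst.comp Primrec.snd) (Primrec.list_length.comp Primrec.fst)).and
      (primrecPred_isDenseCode.comp Primrec.snd)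
  have htake : PrimrecRel fun (l : List Bool) (c : ℕ × List (List Bool)) => l.take c.1 ∈ c.2 :=
    PrimrecRel.list_mem.comp (Primrec.list_take.comp (Primrec.fst.comp Primrec.snd) Primrec.fst)
      (Primrec.snd.comp Primrec.snd)
  have hmem : PrimrecRel fun (l : List Bool) (c : ℕ × List (List Bool)) =>
      c.1 ≤ l.length ∧ IsDenseCode c → l.take c.1 ∈ c.2 :=
    hguard.imp htake
  exact (PrimrecPred.forall_mem_option hcode hmem).computablePred

end DenseRepresentation

open DenseRepresentation

theorem stmt9 :
    ∃ A : Set (List Bool), ComputablePred (· ∈ A) ∧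
      (∀ n : ℕ, 2 ^ n ≤ 3 * ({x | x ∈ A ∧ x.length = n} : Set (List Bool)).ncard) ∧
      ∀ (k : ℕ) (X : Set (List Bool)), (∀ x ∈ X, x.length = k) →
        2 ^ k ≤ 3 * X.ncard →
        ∀ N : ℕ, ∃ n : ℕ, N ≤ n ∧ k ≤ n ∧
          ∀ m : ℕ, n ≤ m → m ≤ 2 * n → RepresentsAt A X m := by
  refine ⟨denseSet, computablePred_mem_denseSet, fun n => ?_, fun k X hX hcard N => ?_⟩
  · simpa only [and_comm] using two_pow_le_three_mul_ncard_denseSet n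
  obtain ⟨L, hdense, rfl⟩ := exists_isDenseCode hX hcard
  set i := Nat.pair (encode (k, L)) (N + k)
  have hi : N + k ≤ 2 ^ i - 1 := by
    have := Nat.right_le_pair (encode (k, L)) (N + k)
    have := Nat.lt_two_pow_self (n := i)
    omega
  refine ⟨2 ^ i - 1, by omega, by omega, fun m hnm hm2n => ?_⟩
  have hcode : codeAt m = some (k, L) := codeAt_of_blockOf_eq _ _ (blockOf_eq_iff.2 ⟨hnm, hm2n⟩)
  exact representsAt_denseSet hcode (by dsimp only; omega) hdense
end

section
/- For every optimal prefix-free decompressor D there exists n₀ such that for every n ≥ n₀ the domain of D contains a string p with n ≤ length(p) ≤ 2n. -/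
open scoped Classical

lemma cpx_le_iff {D : List Bool →. List Bool} {x : List Bool} {m : ℕ} :
    Cpx D x ≤ m ↔ ∃ y, x ∈ D y ∧ y.length ≤ m := by
  refine ⟨fun h => ?_, fun ⟨y, hy, hm⟩ => (cpx_le_length hy).trans (by exact_mod_cast hm)⟩
  have hne : {n : ℕ∞ | ∃ y : List Bool, x ∈ D y ∧ (y.length : ℕ∞) = n}.Nonempty :=
    Set.nonempty_iff_ne_empty.mpr fun hempty => by simp [Cpx, hempty] at h
  obtain ⟨y, hy, hlen⟩ := csInf_mem hne
  exact ⟨y, hy, by exact_mod_cast (hlen.trans_le h : (y.length : ℕ∞) ≤ m)⟩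

lemma exists_incompressible (D : List Bool →. List Bool) (n : ℕ) :
    ∃ x : List Bool, x.length = n ∧ ∀ y, x ∈ D y → n ≤ y.length := by
  by_contra! h
  choose f hf hlen using h
  let g : List.Vector Bool n → Σ i : Fin n, List.Vector Bool i := fun v =>
    ⟨⟨(f v.1 v.2).length, hlen v.1 v.2⟩, ⟨f v.1 v.2, rfl⟩⟩
  have hg : Function.Injective g := fun v w hvw => by
    have hfvw : f v.1 v.2 = f w.1 w.2 := congrArg (fun s => s.2.toList) hvw
    exact Subtype.ext (Part.mem_unique (hf v.1 v.2) (hfvw ▸ hf w.1 w.2))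
  have hcard := Fintype.card_le_of_injective g hg
  simp only [card_vector, Fintype.card_sigma, Fintype.card_bool,
    Fin.sum_univ_eq_sum_range] at hcard
  exact (Nat.geomSum_lt le_rfl (fun k hk => Finset.mem_range.mp hk)).not_ge hcard

/-- The unary prefix and the parity bit determine `|x|`, which makes the code prefix-free. -/
def halfUnaryCode (x : List Bool) : List Bool :=
  List.replicate x.length.div2 false ++ [true, x.length.bodd] ++ x

lemma length_halfUnaryCode (x : List Bool) :
    (halfUnaryCode x).length = x.length.div2 + 2 + x.length := by
  simp only [halfUnaryCode, List.length_append, List.length_replicate, List.length_cons,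
    List.length_nil]

lemma halfUnaryCode_append_eq (x z : List Bool) :
    halfUnaryCode x ++ z =
      (List.replicate x.length.div2 false ++ [true, x.length.bodd]) ++ (x ++ z) :=
  List.append_assoc _ _ _

lemma idxOf_true_halfUnaryCode_append (x z : List Bool) :
    (halfUnaryCode x ++ z).idxOf true = x.length.div2 := by
  simp [halfUnaryCode, List.idxOf_append_of_notMem, List.idxOf_cons_self]

lemma idxOf_true_halfUnaryCode (x : List Bool) :
    (halfUnaryCode x).idxOf true = x.length.div2 := by
  simpa using idxOf_true_halfUnaryCode_append x []

lemma drop_halfUnaryCode_append (x z : List Bool) :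
    (halfUnaryCode x ++ z).drop (x.length.div2 + 2) = x ++ z := by
  rw [halfUnaryCode_append_eq]
  exact List.drop_left' (by simp)

lemma halfUnaryCode_eq_of_prefix {x x' : List Bool}
    (h : halfUnaryCode x <+: halfUnaryCode x') : halfUnaryCode x = halfUnaryCode x' := by
  obtain ⟨z, hz⟩ := h
  have hdiv2 : x.length.div2 = x'.length.div2 := by
    have := congrArg (List.idxOf true) hz
    rwa [idxOf_true_halfUnaryCode_append, idxOf_true_halfUnaryCode] at this
  rw [← List.append_nil (halfUnaryCode x'), halfUnaryCode_append_eq, halfUnaryCode_append_eq,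
    hdiv2] at hz
  obtain ⟨hbodd, hx'⟩ := List.append_inj hz (by simp)
  simp only [List.append_cancel_left_eq, List.cons.injEq, true_and, and_true] at hbodd
  have hlen : x.length = x'.length := by
    rw [← Nat.bodd_add_div2 x.length, ← Nat.bodd_add_div2 x'.length, hbodd, hdiv2]
  rw [List.append_nil] at hx'
  have hz : z = [] := by
    subst hx'
    simp only [List.length_append] at hlen
    exact List.eq_nil_of_length_eq_zero (by omega)
  rw [← hx', hz, List.append_nil]

lemma primrec_halfUnaryCode : Primrec halfUnaryCode := by
  have hrep : Primrec fun x : List Bool => List.replicate x.length.div2 false :=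
    (Primrec.list_map (Primrec.list_range.comp (Primrec.nat_div2.comp Primrec.list_length))
      (Primrec.const false).to₂).of_eq fun x => by simp
  have hheader : Primrec fun x : List Bool => [true, x.length.bodd] :=
    Primrec.list_cons.comp (Primrec.const true)
      (Primrec.list_cons.comp (Primrec.nat_bodd.comp Primrec.list_length) (Primrec.const []))
  exact Primrec.list_append.comp (Primrec.list_append.comp hrep hheader) Primrec.id

lemma drop_idxOf_true_halfUnaryCode (x : List Bool) :
    (halfUnaryCode x).drop ((halfUnaryCode x).idxOf true + 2) = x := by
  rw [idxOf_true_halfUnaryCode]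
  simpa using drop_halfUnaryCode_append x []

def halfUnaryDecode (y : List Bool) : Option (List Bool) :=
  let x := y.drop (y.idxOf true + 2)
  if halfUnaryCode x = y then some x else none

lemma primrec_halfUnaryDecode : Primrec halfUnaryDecode := by
  have hdrop : Primrec fun y : List Bool => y.drop (y.idxOf true + 2) :=
    Primrec.list_drop.comp
      (Primrec.nat_add.comp (Primrec.list_idxOf.comp (Primrec.const true) Primrec.id)
        (Primrec.const 2)) Primrec.id
  exact Primrec.ite (Primrec.eq.comp (primrec_halfUnaryCode.comp hdrop) Primrec.id)
    (Primrec.option_some.comp hdrop) (Primrec.const none)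

lemma halfUnaryDecode_eq_some_iff {x y : List Bool} :
    halfUnaryDecode y = some x ↔ halfUnaryCode x = y := by
  constructor
  · intro h
    simp only [halfUnaryDecode] at h
    split_ifs at h with hy
    cases h; exact hy
  · rintro rfl
    simp only [halfUnaryDecode, drop_idxOf_true_halfUnaryCode, if_true]

def halfUnaryDecompressor : List Bool →. List Bool := fun y => halfUnaryDecode y

lemma mem_halfUnaryDecompressor {x y : List Bool} :
    x ∈ halfUnaryDecompressor y ↔ halfUnaryCode x = y := by
  simp [halfUnaryDecompressor, halfUnaryDecode_eq_some_iff]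

lemma partrec_halfUnaryDecompressor : Partrec halfUnaryDecompressor :=
  Computable.ofOption primrec_halfUnaryDecode.to_comp

lemma prefixFreeSet_dom_halfUnaryDecompressor : PrefixFreeSet halfUnaryDecompressor.Dom := by
  intro p hp q hq
  obtain ⟨x, hx⟩ := (PFun.mem_dom _ _).mp hp
  obtain ⟨x', hx'⟩ := (PFun.mem_dom _ _).mp hq
  rw [mem_halfUnaryDecompressor] at hx hx'
  subst hx hx'
  exact halfUnaryCode_eq_of_prefix

lemma OptimalPrefix.exists_cpx_le_length_halfUnaryCode {V : List Bool →. List Bool}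
    (hV : OptimalPrefix V) : ∃ c : ℕ, ∀ x, Cpx V x ≤ ((halfUnaryCode x).length + c : ℕ) := by
  obtain ⟨c, hc⟩ := hV.2.2 halfUnaryDecompressor partrec_halfUnaryDecompressor
    prefixFreeSet_dom_halfUnaryDecompressor
  refine ⟨c, fun x => (hc x).trans ?_⟩
  push_cast
  gcongr
  exact cpx_le_length (mem_halfUnaryDecompressor.mpr rfl)

theorem stmt11 (D : List Bool →. List Bool) (hD : OptimalPrefix D) :
    ∃ n₀ : ℕ, ∀ n : ℕ, n₀ ≤ n →
      ∃ p ∈ D.Dom, n ≤ p.length ∧ p.length ≤ 2 * n := by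
  obtain ⟨c, hc⟩ := hD.exists_cpx_le_length_halfUnaryCode
  refine ⟨2 * c + 4, fun n hn => ?_⟩
  obtain ⟨x, rfl, hx⟩ := exists_incompressible D n
  obtain ⟨p, hp, hlen⟩ := cpx_le_iff.mp (hc x)
  refine ⟨p, (PFun.mem_dom D p).mpr ⟨x, hp⟩, hx p hp, ?_⟩
  rw [length_halfUnaryCode, Nat.div2_val] at hlen
  omega
end

section
/- There exists an optimal plain decompressor U and binary strings s ≠ t such that s has exactly one U-description p_s (i.e., p_s is the unique string with U(p_s) = s), t has exactly one U-description p_t, and p_s is a proper prefix of p_t. -/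
open scoped Classical

/-!
Start from any optimal plain decompressor `U₀` and give the two one-bit strings `[false]` and
`[true]` the descriptions `[]` and `[true]`, which become their only descriptions: on every other
input `y` the new decompressor runs `U₀` on `y.tail` and suppresses these two outputs. A
`U₀`-description `z` of any other string yields the description `false :: z`, so complexities
grow by at most one and optimality survives. For `U₀` take the usual universal machine.
-/

open Nat.Partrec (Code)
open Encodable

section Complexity

variable {D U : List Bool →. List Bool} {x : List Bool}

theorem Cpx_le_length {y : List Bool} (h : x ∈ D y) : Cpx D x ≤ y.length :=
  sInf_le ⟨y, h, rfl⟩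

theorem exists_mem_length_eq_Cpx (h : Cpx D x ≠ ⊤) :
    ∃ y, x ∈ D y ∧ (y.length : ℕ∞) = Cpx D x := by
  have hne : {n : ℕ∞ | ∃ y : List Bool, x ∈ D y ∧ (y.length : ℕ∞) = n}.Nonempty := by
    by_contra hempty
    exact h (by rw [Cpx, Set.not_nonempty_iff_eq_empty.1 hempty, sInf_empty])
  exact csInf_mem hne

theorem Cpx_le_Cpx_add_of_forall_mem (c : ℕ)
    (h : ∀ x y, x ∈ D y → ∃ y', x ∈ U y' ∧ y'.length ≤ y.length + c) :
    Cpx U x ≤ Cpx D x + c := by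
  rcases eq_or_ne (Cpx D x) ⊤ with hD | hD
  · simp [hD]
  obtain ⟨y, hy, hlen⟩ := exists_mem_length_eq_Cpx hD
  obtain ⟨y', hy', hlen'⟩ := h x y hy
  calc Cpx U x ≤ y'.length := Cpx_le_length hy'
    _ ≤ ((y.length + c : ℕ) : ℕ∞) := by exact_mod_cast hlen'
    _ = Cpx D x + c := by rw [Nat.cast_add, hlen]

theorem OptimalPlain.of_Cpx_le {U₀ : List Bool →. List Bool} (hU₀ : OptimalPlain U₀)
    (hU : Partrec U) {c : ℕ} (h : ∀ x, Cpx U x ≤ Cpx U₀ x + c) : OptimalPlain U := by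
  refine ⟨hU, fun D hD => ?_⟩
  obtain ⟨c₀, hc₀⟩ := hU₀.2 D hD
  refine ⟨c₀ + c, fun x => ?_⟩
  calc Cpx U x ≤ Cpx U₀ x + c := h x
    _ ≤ Cpx D x + c₀ + c := by gcongr; exact hc₀ x
    _ = Cpx D x + ↑(c₀ + c) := by rw [Nat.cast_add, add_assoc]

end Complexity

section Universal

/-- The input `1ᵉ0z` runs the partial recursive code with index `e` on `z`. -/
def universalDecompressor : List Bool →. List Bool := fun y =>
  (Code.eval (Denumerable.ofNat Code (y.idxOf false)) (encode (y.drop (y.idxOf false + 1)))).bind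
    fun m => Part.ofOption (decode m)

theorem universalDecompressor_partrec : Partrec universalDecompressor := by
  have hidx : Primrec fun y : List Bool => y.idxOf false :=
    Primrec.list_idxOf.comp (Primrec.const false) Primrec.id
  have hdrop : Primrec fun y : List Bool => y.drop (y.idxOf false + 1) :=
    Primrec.list_drop.comp (Primrec.succ.comp hidx) Primrec.id
  exact Code.eval_part.comp ((Computable.ofNat Code).comp hidx.to_comp)
      (Computable.encode.comp hdrop.to_comp)
    |>.bind (Computable.ofOption (Computable.decode.comp Computable.snd)).to₂

theorem mem_universalDecompressor {c : Code} {x z : List Bool}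
    (h : encode x ∈ c.eval (encode z)) :
    x ∈ universalDecompressor (List.replicate (encode c) true ++ false :: z) := by
  have hidx : (List.replicate (encode c) true ++ false :: z).idxOf false = encode c := by
    rw [List.idxOf_append_of_notMem (by simp)]
    simp
  have hdrop : (List.replicate (encode c) true ++ false :: z).drop (encode c + 1) = z := by
    simpa using List.drop_left (l₁ := List.replicate (encode c) true ++ [false]) (l₂ := z)
  simp only [universalDecompressor, hidx, hdrop, Denumerable.ofNat_encode]
  exact Part.mem_bind_iff.2 ⟨encode x, h, by simp⟩

theorem optimalPlain_universalDecompressor : OptimalPlain universalDecompressor := by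
  refine ⟨universalDecompressor_partrec, fun D hD => ?_⟩
  obtain ⟨c, hc⟩ := Code.exists_code.1 hD
  refine ⟨encode c + 1, fun x => Cpx_le_Cpx_add_of_forall_mem _ fun x z h => ?_⟩
  refine ⟨_, mem_universalDecompressor (c := c) (by simpa [hc] using h), ?_⟩
  simp only [List.length_append, List.length_replicate, List.length_cons]
  omega

end Universal

section Reserve

variable (U₀ : List Bool →. List Bool)

def reserveSingletons : List Bool →. List Bool := fun y =>
  if y = [] then Part.some [false]
  else if y = [true] then Part.some [true]
  else (U₀ y.tail).bind fun x => Part.assert (x ≠ [false] ∧ x ≠ [true]) fun _ => Part.some x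

variable {U₀}

theorem reserveSingletons_partrec (hU₀ : Partrec U₀) : Partrec (reserveSingletons U₀) := by
  have hdec (l : List Bool) : PrimrecPred fun y : List Bool => y = l :=
    Primrec.eq.comp Primrec.id (Primrec.const l)
  have hfilter : Partrec₂ fun (_ : List Bool) (x : List Bool) =>
      bif decide (x ≠ [false] ∧ x ≠ [true]) then Part.some x else Part.none :=
    Partrec.cond (((hdec _).not.and (hdec _).not).decide.to_comp.comp Computable.snd)
      Computable.snd Partrec.none
  refine (Partrec.cond (hdec []).decide.to_comp (Computable.const [false]).partrec <|
    Partrec.cond (hdec [true]).decide.to_comp (Computable.const [true]).partrec <|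
      (hU₀.comp Primrec.list_tail.to_comp).bind hfilter).of_eq fun y => ?_
  simp only [reserveSingletons, Bool.cond_decide]
  split_ifs
  · rfl
  · rfl
  · refine congrArg _ (funext fun x => ?_)
    by_cases hx : x ≠ [false] ∧ x ≠ [true]
    · rw [Part.assert_pos hx, if_pos hx]
    · rw [Part.assert_neg hx, if_neg hx]

theorem mem_reserveSingletons_nil_iff (y : List Bool) :
    [false] ∈ reserveSingletons U₀ y ↔ y = [] := by
  unfold reserveSingletons; split_ifs <;> simp_all

theorem mem_reserveSingletons_true_iff (y : List Bool) :
    [true] ∈ reserveSingletons U₀ y ↔ y = [true] := by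
  unfold reserveSingletons; split_ifs <;> simp_all

theorem Cpx_reserveSingletons_le (x : List Bool) :
    Cpx (reserveSingletons U₀) x ≤ Cpx U₀ x + 1 := by
  refine Cpx_le_Cpx_add_of_forall_mem 1 fun x z h => ?_
  by_cases hf : x = [false]
  · exact ⟨[], by simp [hf, mem_reserveSingletons_nil_iff], by simp⟩
  by_cases ht : x = [true]
  · exact ⟨[true], by simp [ht, mem_reserveSingletons_true_iff], by simp⟩
  refine ⟨false :: z, ?_, by simp⟩
  simpa [reserveSingletons] using ⟨h, hf, ht⟩

end Reserve

theorem stmt14 :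
    ∃ U : List Bool →. List Bool, OptimalPlain U ∧
      ∃ s t pₛ pₜ : List Bool, s ≠ t ∧
        (∀ y : List Bool, s ∈ U y ↔ y = pₛ) ∧
        (∀ y : List Bool, t ∈ U y ↔ y = pₜ) ∧
        pₛ <+: pₜ ∧ pₛ ≠ pₜ :=
  ⟨reserveSingletons universalDecompressor,
    optimalPlain_universalDecompressor.of_Cpx_le
      (reserveSingletons_partrec universalDecompressor_partrec) Cpx_reserveSingletons_le,
    [false], [true], [], [true], by simp, mem_reserveSingletons_nil_iff,
    mem_reserveSingletons_true_iff, List.nil_prefix, by simp⟩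
end
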